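/- arXiv:2312.02644 — 4 statements merged into one kernel-verified Lean document; each statement's English description precedes it below -/
import Mathlib

section
/- For the continuous-time approximation of a Q-learning algorithm in region ω_{X,Y}, if a steady state exists then the steady-state values satisfy Q_C = (1/(1-γ))·Σ_Y π̂_{C,Y} and Q_D = π̂_{D,·} + γ·Q_C when C is the greedy action; substituting the prisoner's dilemma payoffs with π_{D,Y} > π_{C,Y} for all Y yields Q_D > Q_C, contradicting C being greedy. Hence no steady state of the continuous-time flow exists in any region where at least one player holds C as the preferred action. -/
/-- No steady state of the continuous-time flow exists in a region where player A holds C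
as the preferred action: the steady-state equations force `Q_D > Q_C`, a contradiction.
`Y = true` means the opponent's preferred action is C, `Y = false` means it is D. -/
theorem no_steady_state_when_C_greedy
    (α γ g εA εB QC QD : ℝ) (Y : Bool)
    (hα0 : 0 < α) (hα1 : α < 1) (hγ0 : 0 ≤ γ) (hγ1 : γ < 1)
    (hg1 : 1 < g) (hg2 : g ≤ 2)
    (hεA0 : 0 < εA) (hεA1 : εA ≤ 1) (hεB0 : 0 ≤ εB) (hεB1 : εB ≤ 1)
    -- averaged one-period payoffs of A for playing C and D against the opponent's policy
    (πhatC πhatD : ℝ)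
    (hπC : πhatC = if Y then (1 - εB / 2) * (2 * g) + (εB / 2) * g
                   else (1 - εB / 2) * g + (εB / 2) * (2 * g))
    (hπD : πhatD = if Y then (1 - εB / 2) * (2 + g) + (εB / 2) * 2
                   else (1 - εB / 2) * 2 + (εB / 2) * (2 + g))
    -- C is A's greedy action in this region
    (hgreedy : QD < QC)
    -- steady-state equations: the flow for player A vanishes
    (hss1 : α * (1 - εA / 2) * (πhatC - (1 - γ) * QC) = 0)
    (hss2 : α * (εA / 2) * (πhatD + γ * QC - QD) = 0) :
    False := by
  have h1 : πhatC - (1 - γ) * QC = 0 := by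
    have hne : α * (1 - εA / 2) ≠ 0 := by nlinarith
    exact (mul_eq_zero.mp hss1).resolve_left hne
  have h2 : πhatD + γ * QC - QD = 0 := by
    have hne : α * (εA / 2) ≠ 0 := by positivity
    exact (mul_eq_zero.mp hss2).resolve_left hne
  cases Y <;> simp only [if_true, if_false, Bool.false_eq_true, Bool.true_eq_false] at hπC hπD <;> nlinarith
end

section
/- If both designers are greedy (ε_A = ε_B = 0) and the initial Q-values lie in the region ω_{CC} where both players' Q-value for C exceeds that for D, then the system remains in ω_{CC} for all time, since under mutual cooperation the greedy Q-learning update increases (or keeps above its original level relative to the other) the Q-value of C while leaving the Q-value of D unchanged. -/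
/-- State of the two greedy Q-learners: Q-values of players A and B for actions C and D. -/
structure QState where
  qAC : ℝ
  qAD : ℝ
  qBC : ℝ
  qBD : ℝ

/-- Payoff to a player in the prisoner's dilemma with cooperation parameter `g`;
`true` stands for playing C, `false` for playing D. First argument: own action,
second: opponent's action. -/
def pdPayoff (g : ℝ) (a b : Bool) : ℝ :=
  if a then (if b then 2 * g else g) else (if b then 2 + g else 2)

/-- One step of the dynamics when both players are greedy (ε = 0): each plays the action
with the strictly higher Q-value (D in case of a tie) and updates only that action. -/
noncomputable def greedyStep (α γ g : ℝ) (s : QState) : QState :=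
  let aA : Bool := decide (s.qAD < s.qAC)
  let aB : Bool := decide (s.qBD < s.qBC)
  let rA := pdPayoff g aA aB
  let rB := pdPayoff g aB aA
  { qAC := if aA then (1 - α) * s.qAC + α * (rA + γ * s.qAC) else s.qAC
    qAD := if aA then s.qAD else (1 - α) * s.qAD + α * (rA + γ * s.qAD)
    qBC := if aB then (1 - α) * s.qBC + α * (rB + γ * s.qBC) else s.qBC
    qBD := if aB then s.qBD else (1 - α) * s.qBD + α * (rB + γ * s.qBD) }

/-- If both designers are greedy and the initial Q-values lie in `I_C × I_D` with the
Q-value of C above that of D for both players (i.e. the system starts in `ω_CC`),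
then the system remains in `ω_CC` for all time. -/
theorem greedy_greedy_stays_in_CC
    (α γ g : ℝ) (s₀ : QState)
    (hα0 : 0 < α) (hα1 : α ≤ 1) (hγ0 : 0 ≤ γ) (hγ1 : γ < 1)
    (hg1 : 1 < g) (hg2 : g ≤ 2)
    (hAC : s₀.qAC ∈ Set.Icc (g / (1 - γ)) (2 * g / (1 - γ)))
    (hAD : s₀.qAD ∈ Set.Icc (2 / (1 - γ)) ((2 + g) / (1 - γ)))
    (hBC : s₀.qBC ∈ Set.Icc (g / (1 - γ)) (2 * g / (1 - γ)))
    (hBD : s₀.qBD ∈ Set.Icc (2 / (1 - γ)) ((2 + g) / (1 - γ)))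
    (hA : s₀.qAD < s₀.qAC) (hB : s₀.qBD < s₀.qBC) :
    ∀ n : ℕ, ((greedyStep α γ g)^[n] s₀).qAD < ((greedyStep α γ g)^[n] s₀).qAC ∧
             ((greedyStep α γ g)^[n] s₀).qBD < ((greedyStep α γ g)^[n] s₀).qBC := by
  have hγ : 0 < 1 - γ := by linarith
  -- invariant
  set P : QState → Prop := fun s =>
    s.qAC ≤ 2 * g / (1 - γ) ∧ s.qAD < s.qAC ∧ s.qBC ≤ 2 * g / (1 - γ) ∧ s.qBD < s.qBC
    with hP
  have key : ∀ n : ℕ, P ((greedyStep α γ g)^[n] s₀) := by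
    intro n
    induction n with
    | zero => exact ⟨hAC.2, hA, hBC.2, hB⟩
    | succ n ih =>
      rw [Function.iterate_succ_apply']
      set s := (greedyStep α γ g)^[n] s₀ with hs
      obtain ⟨h1, h2, h3, h4⟩ := ih
      have e2 : decide (s.qAD < s.qAC) = true := by simpa using h2
      have e4 : decide (s.qBD < s.qBC) = true := by simpa using h4
      have b1 : s.qAC * (1 - γ) ≤ 2 * g := (le_div_iff₀ hγ).mp h1
      have b3 : s.qBC * (1 - γ) ≤ 2 * g := (le_div_iff₀ hγ).mp h3
      have ha : (0:ℝ) ≤ 1 - α * (1 - γ) := by nlinarith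
      have d1 : 0 ≤ 2 * g - (1 - γ) * s.qAC := by nlinarith
      have d3 : 0 ≤ 2 * g - (1 - γ) * s.qBC := by nlinarith
      have m1 := mul_nonneg d1 ha
      have m3 := mul_nonneg d3 ha
      have mα1 := mul_nonneg hα0.le d1
      have mα3 := mul_nonneg hα0.le d3
      simp only [greedyStep, e2, e4, if_true, pdPayoff]
      refine ⟨?_, ?_, ?_, ?_⟩ <;> dsimp only
      · rw [le_div_iff₀ hγ]; nlinarith
      · nlinarith
      · rw [le_div_iff₀ hγ]; nlinarith
      · nlinarith
  intro n
  obtain ⟨_, h2, _, h4⟩ := key n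
  exact ⟨h2, h4⟩
end

section
/- In the designing game G(g) with g ∈ (1,2], the profile (ε_A, ε_B) = (0, 0) is a strict Nash equilibrium: the payoff from deviating to any ε_A > 0 is 2(1-ε_A/2) + g·(ε_A/2) < 2, while the payoff at (0,0) is 2·τ_DD + 2g·τ_CC ≥ 2 with strict inequality when τ_CC > 0. -/
/-- `(0,0)` is a strict Nash equilibrium of the designing game: any deviation `ε_A > 0`
yields payoff `2(1-ε_A/2) + g·ε_A/2 ≤ 2`, strictly below the payoff
`2τ_DD + 2g·τ_CC > 2` obtained at `(0,0)` when `τ_CC > 0`. -/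
theorem zero_zero_strict_nash
    (g τCC τDD : ℝ)
    (hg1 : 1 < g) (hg2 : g ≤ 2)
    (hτCC : 0 < τCC) (hτDD : 0 ≤ τDD) (hsum : τCC + τDD = 1) :
    ∀ εA : ℝ, 0 < εA → εA ≤ 1 →
      2 * (1 - εA / 2) + g * (εA / 2) < 2 * τDD + 2 * g * τCC := by
  intro e he1 he2
  nlinarith [mul_pos (sub_pos.mpr hg1) hτCC, mul_nonneg (le_of_lt he1) (sub_nonneg.mpr hg2)]
end

section
/- Let π_A(ε_A, ε_B) = τ_CD·π_A^{CD}(ε_A,ε_B) + τ_DD·π_A^{DD}(ε_A,ε_B) with τ_CD, τ_DD ≥ 0, τ_CD + τ_DD = 1, τ_CD > 0, and 1 < g < 2, ε_A, ε_B ∈ (0,1]. Then π_A(ε_A, ε_B) < (1-ε_B/2)·2 + (ε_B/2)·(2+g), i.e., A's payoff under any mixture over regions ω_{CD} and ω_{DD} with positive weight on ω_{CD} is strictly less than A's region-ω_{DD} payoff with ε_A = 0. -/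
/-- A's payoff under any mixture over regions `ω_CD` and `ω_DD` with positive weight on
`ω_CD` is strictly less than A's region-`ω_DD` payoff with `ε_A = 0`. -/
theorem mixture_payoff_lt_greedy_DD_payoff
    (g εA εB τCD τDD : ℝ)
    (hg1 : 1 < g) (hg2 : g < 2)
    (hεA0 : 0 < εA) (hεA1 : εA ≤ 1) (hεB0 : 0 < εB) (hεB1 : εB ≤ 1)
    (hτCD : 0 < τCD) (hτDD : 0 ≤ τDD) (hsum : τCD + τDD = 1) :
    τCD * ((1 - εA / 2) * ((1 - εB / 2) * g + (εB / 2) * (2 * g)) +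
            (εA / 2) * ((1 - εB / 2) * 2 + (εB / 2) * (2 + g))) +
    τDD * ((1 - εA / 2) * ((1 - εB / 2) * 2 + (εB / 2) * (2 + g)) +
            (εA / 2) * ((1 - εB / 2) * g + (εB / 2) * (2 * g))) <
      (1 - εB / 2) * 2 + (εB / 2) * (2 + g) := by
  have h : τDD = 1 - τCD := by linarith
  subst h
  nlinarith [mul_pos hτCD (show (0:ℝ) < 2 - g by linarith),
    mul_pos hεA0 (show (0:ℝ) < 2 - g by linarith),
    mul_nonneg (mul_nonneg hτCD.le (show (0:ℝ) ≤ 1 - εA by linarith))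
      (show (0:ℝ) ≤ 2 - g by linarith)]
end
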